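/- For the order ▷_ℓ on terms and sequences: if a ▷_ℓ b, then for all sequences (or terms) c_1, c_2, the concatenation c_1 ++ a ++ c_2 ▷_ℓ c_1 ++ b ++ c_2, where a term t is identified with the singleton sequence [t]. -/
import Mathlib


/-- First-order terms over signature `F` and variables `V`. -/
inductive Trm (F V : Type) where
  | var : V → Trm F V
  | fn : F → List (Trm F V) → Trm F V

/-- `SSub s t` : `t` is a strict subterm of `s`. -/
inductive SSub {F V : Type} : Trm F V → Trm F V → Prop where
  | arg {f ts t} : t ∈ ts → SSub (Trm.fn f ts) t
  | trans {f ts s t} : s ∈ ts → SSub s t → SSub (Trm.fn f ts) t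

/-- Reflexive closure of a relation, used for product extensions. -/
def EqOr {α : Type} (r : α → α → Prop) (a b : α) : Prop := a = b ∨ r a b

/-- Product extension of a relation on lists: componentwise equal-or-smaller,
with at least one component strictly smaller. -/
def ProdExtL {α : Type} (r : α → α → Prop) (xs ys : List α) : Prop :=
  List.Forall₂ (EqOr r) xs ys ∧
    ∃ i, ∃ (h₁ : i < xs.length) (h₂ : i < ys.length), r xs[i] ys[i]

/-- Elements compared by `▷_ℓ`: terms (inl) or sequences of terms (inr). -/
abbrev TS (F V : Type) := Trm F V ⊕ List (Trm F V)

/-- Identification of a term with the singleton sequence. -/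
def toL {F V : Type} : TS F V → List (Trm F V) := Sum.elim (fun t => [t]) id

mutual
  /-- The auxiliary order `▷_ℓ` (Definition of `poel`) on terms and sequences,
  induced by a precedence `prec` and the width bound `ℓ`. -/
  inductive Poel {F V : Type} (prec : F → F → Prop) (ℓ : ℕ) : TS F V → TS F V → Prop where
    /- clause (1): precedence descent to strict subterms, width at most ℓ -/
    | ia {f g : F} {ss ts : List (Trm F V)} :
        prec f g → (∀ t ∈ ts, SSub (Trm.fn f ss) t) → ts.length ≤ ℓ →
        Poel prec ℓ (Sum.inl (Trm.fn f ss)) (Sum.inl (Trm.fn g ts))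
    /- clause (2): same symbol, product extension of the strict-subterm order -/
    | tsc {f : F} {ss ts : List (Trm F V)} :
        ProdExtL SSub ss ts →
        Poel prec ℓ (Sum.inl (Trm.fn f ss)) (Sum.inl (Trm.fn f ts))
    /- clause (3): descent from a term to a sequence of at most ℓ smaller terms -/
    | ialst {f : F} {ss ts : List (Trm F V)} :
        (∀ t ∈ ts, Poel prec ℓ (Sum.inl (Trm.fn f ss)) (Sum.inl t)) → ts.length ≤ ℓ →
        Poel prec ℓ (Sum.inl (Trm.fn f ss)) (Sum.inr ts)
    /- clause (4): sequences, splitting `ts = b₁ ++ ⋯ ++ b_k` with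
       `⟨s₁,…,s_k⟩` greater than `⟨b₁,…,b_k⟩` in the product extension of `▷_ℓ` -/
    | ms {ss ts : List (Trm F V)} (bs : List (TS F V)) :
        ts = (bs.map toL).flatten →
        PoelProd prec ℓ (ss.map Sum.inl) bs →
        Poel prec ℓ (Sum.inr ss) (Sum.inr ts)

  /-- Product extension of `▷_ℓ`: componentwise equal-or-smaller with at
  least one strict decrease. -/
  inductive PoelProd {F V : Type} (prec : F → F → Prop) (ℓ : ℕ) :
      List (TS F V) → List (TS F V) → Prop where
    | strict {a b as bs} : Poel prec ℓ a b → PoelGE prec ℓ as bs →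
        PoelProd prec ℓ (a :: as) (b :: bs)
    | cons_eq {a as bs} : PoelProd prec ℓ as bs → PoelProd prec ℓ (a :: as) (a :: bs)
    | cons_lt {a b as bs} : Poel prec ℓ a b → PoelProd prec ℓ as bs →
        PoelProd prec ℓ (a :: as) (b :: bs)

  /-- Componentwise equal-or-smaller (w.r.t. `▷_ℓ`) lists of equal length. -/
  inductive PoelGE {F V : Type} (prec : F → F → Prop) (ℓ : ℕ) :
      List (TS F V) → List (TS F V) → Prop where
    | nil : PoelGE prec ℓ [] []
    | cons_eq {a as bs} : PoelGE prec ℓ as bs → PoelGE prec ℓ (a :: as) (a :: bs)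
    | cons_lt {a b as bs} : Poel prec ℓ a b → PoelGE prec ℓ as bs →
        PoelGE prec ℓ (a :: as) (b :: bs)
end

lemma poelGE_refl {F V : Type} (prec : F → F → Prop) (ℓ : ℕ) :
    ∀ l : List (TS F V), PoelGE prec ℓ l l
  | [] => .nil
  | _ :: l => .cons_eq (poelGE_refl prec ℓ l)

lemma poelGE_append {F V : Type} {prec : F → F → Prop} {ℓ : ℕ} {as bs : List (TS F V)}
    (h : PoelGE prec ℓ as bs) (y : List (TS F V)) : PoelGE prec ℓ (as ++ y) (bs ++ y) := by
  induction as generalizing bs with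
  | nil => cases h; exact poelGE_refl _ _ y
  | cons a as ih =>
    cases h with
    | cons_eq h => exact .cons_eq (ih h)
    | cons_lt h h' => exact .cons_lt h (ih h')

lemma poelProd_append_right {F V : Type} {prec : F → F → Prop} {ℓ : ℕ} {as bs : List (TS F V)}
    (h : PoelProd prec ℓ as bs) (y : List (TS F V)) : PoelProd prec ℓ (as ++ y) (bs ++ y) := by
  induction as generalizing bs with
  | nil => cases h
  | cons a as ih =>
    cases h with
    | strict h hge => exact .strict h (poelGE_append hge y)
    | cons_eq h => exact .cons_eq (ih h)
    | cons_lt h h' => exact .cons_lt h (ih h')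

lemma poelProd_append_left {F V : Type} {prec : F → F → Prop} {ℓ : ℕ} (x : List (TS F V))
    {as bs : List (TS F V)} (h : PoelProd prec ℓ as bs) :
    PoelProd prec ℓ (x ++ as) (x ++ bs) := by
  induction x with
  | nil => exact h
  | cons a x ih => exact .cons_eq ih

lemma flatten_map_inl {F V : Type} (l : List (Trm F V)) :
    ((l.map Sum.inl).map (toL (F := F) (V := V))).flatten = l := by
  induction l with
  | nil => rfl
  | cons t l ih => simp only [List.map_cons, List.flatten_cons, ih]; rfl

/-- Compatibility of `▷_ℓ` with concatenation: if `a ▷_ℓ b` then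
`c₁ ++ a ++ c₂ ▷_ℓ c₁ ++ b ++ c₂`, identifying a term with its singleton
sequence. -/
theorem poel_append_compat {F V : Type} (prec : F → F → Prop) (ℓ : ℕ) (hℓ : 1 ≤ ℓ)
    (a b c₁ c₂ : TS F V) (h : Poel prec ℓ a b) :
    Poel prec ℓ (Sum.inr (toL c₁ ++ toL a ++ toL c₂))
                (Sum.inr (toL c₁ ++ toL b ++ toL c₂)) := by
  obtain ⟨bs', hts, hprod⟩ : ∃ bs' : List (TS F V),
      toL b = (bs'.map toL).flatten ∧ PoelProd prec ℓ ((toL a).map Sum.inl) bs' := by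
    cases a with
    | inl t =>
      refine ⟨[b], by simp [toL], ?_⟩
      exact .strict h .nil
    | inr ss' =>
      cases h with
      | ms bs hts hprod => exact ⟨bs, hts, hprod⟩
  refine .ms ((toL c₁).map Sum.inl ++ bs' ++ (toL c₂).map Sum.inl) ?_ ?_
  · simp only [List.map_append, List.flatten_append, flatten_map_inl, hts]
  · have h1 := poelProd_append_right hprod ((toL c₂).map Sum.inl)
    have h2 := poelProd_append_left ((toL c₁).map Sum.inl) h1
    simpa [List.map_append, List.append_assoc] using h2
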